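/- Let p be a prime, F a free group, F_H a normal subgroup of F of index p^n for some n, and r ∈ F_H a non-identity element. Write r = w^{p^{e_p(r,F)}} with w ∈ F (w the p^{e_p(r,F)}-th root of r in F). Then e_p(r,F_H) ≤ e_p(r,F) and the index of ⟨w⟩ ∩ F_H in the cyclic group ⟨w⟩ equals p^{e_p(r,F) − e_p(r,F_H)}. -/

import Mathlib

/-!
Torsion-freeness of free groups makes roots unique, and word length bounds the root exponents,
so `e = e_p(r,F)` and `f = e_p(r,F_H)` are attained. Since `F/F_H` is a `p`-group, the image of
`w` there has order `p^k`, which is the index of `⟨w⟩ ∩ F_H` in `⟨w⟩`, and `w^{p^m} ∈ F_H` iff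
`k ≤ m`. Then `w^{p^k} ∈ F_H` is a `p^{e-k}`-th root of `r`, so `e - k ≤ f`; conversely the root
of `r` in `F_H` is `w^{p^{e-f}}` by uniqueness of roots, so `k ≤ e - f`.
-/

/-- `epIn p S w`: the largest natural number `e` such that `w` has a `p^e`-th root
belonging to the subgroup `S` of the free group.  For `S = ⊤` this is `e_p(w, F)`. -/
noncomputable def epIn {X : Type*} (p : ℕ) (S : Subgroup (FreeGroup X)) (w : FreeGroup X) : ℕ :=
  sSup {e : ℕ | ∃ v ∈ S, v ^ p ^ e = w}

namespace FreeGroup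

variable {α : Type*} [DecidableEq α]

theorem reduceCyclically_toWord_ne_nil {x : FreeGroup α} (hx : x ≠ 1) :
    reduceCyclically x.toWord ≠ [] := by
  intro h
  apply hx
  rw [← mk_toWord (x := x), ← reduceCyclically.conj_conjugator_reduceCyclically x.toWord, h,
    List.append_nil, ← mul_mk, ← inv_mk, mul_inv_cancel]

theorem le_norm_pow {x : FreeGroup α} (hx : x ≠ 1) (n : ℕ) : n ≤ (x ^ n).norm := by
  have hlen := List.length_pos_iff.mpr (reduceCyclically_toWord_ne_nil hx)
  rcases eq_or_ne n 0 with rfl | hn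
  · exact Nat.zero_le _
  simp only [norm, toWord_pow, reduceCyclically.reduce_flatten_replicate isReduced_toWord, hn,
    if_false, List.length_append, List.length_flatten, List.map_replicate, List.sum_replicate,
    smul_eq_mul]
  nlinarith

end FreeGroup

section RootExponent

variable {X : Type*} {p : ℕ} {S T : Subgroup (FreeGroup X)} {w : FreeGroup X}

theorem bddAbove_rootExponents (hp : 1 < p) (hw : w ≠ 1) :
    BddAbove {e : ℕ | ∃ v ∈ S, v ^ p ^ e = w} := by
  classical
  refine ⟨w.norm, ?_⟩
  rintro e ⟨v, -, hv⟩
  have hv1 : v ≠ 1 := by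
    rintro rfl
    exact hw (by rw [← hv, one_pow])
  calc e ≤ p ^ e := (Nat.lt_pow_self hp).le
    _ ≤ (v ^ p ^ e).norm := FreeGroup.le_norm_pow hv1 _
    _ = w.norm := by rw [hv]

theorem le_epIn (hp : 1 < p) (hw : w ≠ 1) {v : FreeGroup X} (hv : v ∈ S) {e : ℕ}
    (hve : v ^ p ^ e = w) : e ≤ epIn p S w :=
  le_csSup (bddAbove_rootExponents hp hw) ⟨v, hv, hve⟩

theorem exists_pow_epIn_eq (hp : 1 < p) (hw : w ≠ 1) (hwS : w ∈ S) :
    ∃ v ∈ S, v ^ p ^ epIn p S w = w :=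
  Nat.sSup_mem (s := {e : ℕ | ∃ v ∈ S, v ^ p ^ e = w}) ⟨0, w, hwS, by rw [pow_zero, pow_one]⟩
    (bddAbove_rootExponents hp hw)

theorem epIn_mono (hp : 1 < p) (hw : w ≠ 1) (hwS : w ∈ S) (hST : S ≤ T) :
    epIn p S w ≤ epIn p T w :=
  let ⟨_, hv, hve⟩ := exists_pow_epIn_eq hp hw hwS
  le_epIn hp hw (hST hv) hve

end RootExponent

section QuotientOrder

variable {G : Type*} [Group G] (H : Subgroup G) [H.Normal]

theorem Subgroup.relIndex_zpowers (g : G) :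
    H.relIndex (Subgroup.zpowers g) = orderOf (g : G ⧸ H) := by
  have := Subgroup.relIndex_ker (K := Subgroup.zpowers g) (QuotientGroup.mk' H)
  rw [QuotientGroup.ker_mk'] at this
  rw [this, MonoidHom.map_zpowers, Nat.card_zpowers]
  rfl

theorem exists_orderOf_mk_eq_prime_pow {p n : ℕ} (hp : p.Prime) (hidx : H.index = p ^ n)
    (g : G) : ∃ k, orderOf (g : G ⧸ H) = p ^ k := by
  have : orderOf (g : G ⧸ H) ∣ p ^ n := hidx ▸ orderOf_dvd_natCard _
  obtain ⟨k, -, hk⟩ := (Nat.dvd_prime_pow hp).mp this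
  exact ⟨k, hk⟩

theorem pow_prime_pow_mem_iff {p k : ℕ} (hp : 1 < p) {g : G}
    (hg : orderOf (g : G ⧸ H) = p ^ k) (m : ℕ) : g ^ p ^ m ∈ H ↔ k ≤ m := by
  rw [← QuotientGroup.eq_one_iff, QuotientGroup.mk_pow, ← orderOf_dvd_iff_pow_eq_one, hg,
    Nat.pow_dvd_pow_iff_le_right hp]

end QuotientOrder

/-- Let `p` be a prime, `F` a free group, `F_H ⊴ F` of index `pⁿ`, and `r ∈ F_H` a
non-identity element, `r = w^{p^{e_p(r,F)}}`.  Then `e_p(r,F_H) ≤ e_p(r,F)` and the index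
of `⟨w⟩ ∩ F_H` in `⟨w⟩` equals `p^{e_p(r,F) - e_p(r,F_H)}`. -/
theorem stmt10 (p : ℕ) (hp : p.Prime) (X : Type)
    (FH : Subgroup (FreeGroup X)) (hFHnorm : FH.Normal)
    (n : ℕ) (hidx : FH.index = p ^ n)
    (r : FreeGroup X) (hr : r ≠ 1) (hrFH : r ∈ FH)
    (w : FreeGroup X) (hw : w ^ p ^ epIn p ⊤ r = r) :
    epIn p FH r ≤ epIn p ⊤ r ∧
      FH.relIndex (Subgroup.zpowers w) = p ^ (epIn p ⊤ r - epIn p FH r) := by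
  have hp1 := hp.one_lt
  set e := epIn p ⊤ r
  set f := epIn p FH r
  have hfe : f ≤ e := epIn_mono hp1 hr hrFH le_top
  obtain ⟨k, hk⟩ := exists_orderOf_mk_eq_prime_pow FH hp hidx w
  have hke : k ≤ e := (pow_prime_pow_mem_iff FH hp1 hk e).mp (hw ▸ hrFH)
  have hekf : e - k ≤ f := by
    refine le_epIn hp1 hr ((pow_prime_pow_mem_iff FH hp1 hk k).mpr le_rfl) ?_
    rw [← pow_mul, ← pow_add, Nat.add_sub_cancel' hke, hw]
  have hkef : k ≤ e - f := by
    obtain ⟨v, hv, hvr⟩ := exists_pow_epIn_eq hp1 hr hrFH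
    have hv_eq : v = w ^ p ^ (e - f) :=
      pow_left_injective (pow_ne_zero f hp.ne_zero) <| show v ^ p ^ f = (w ^ p ^ (e - f)) ^ p ^ f by
        rw [hvr, ← pow_mul, ← pow_add, Nat.sub_add_cancel hfe, hw]
    exact (pow_prime_pow_mem_iff FH hp1 hk _).mp (hv_eq ▸ hv)
  refine ⟨hfe, ?_⟩
  rw [FH.relIndex_zpowers, hk]
  congr 1
  omega
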